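/- Let G be a finite group, i ≥ 4, with V_i = 1 and G' abelian. Let D_i = C_G(G_{i-1}) and E_i be defined by E_i/(G_{i-1} ∩ Z(G)) = C_{G/(G_{i-1} ∩ Z(G))}(G_{i-2}/(G_{i-1} ∩ Z(G))). Then D_i ≤ E_i. -/

import Mathlib

open Subgroup
open scoped Pointwise

/-- The vanishing-off subgroup `V(G)`: generated by all `g` at which some
nonlinear irreducible character does not vanish. -/
def vanishingOff (G : Type) [Group G] : Subgroup G :=
  Subgroup.closure {g | ∃ V : FDRep ℂ G, CategoryTheory.Simple V ∧
    1 < Module.finrank ℂ V ∧ FDRep.character V g ≠ 0}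

instance vanishingOff_normal (G : Type) [Group G] : (vanishingOff G).Normal := by
  constructor
  intro n hn g
  have hset : ∀ x ∈ {g | ∃ V : FDRep ℂ G, CategoryTheory.Simple V ∧
      1 < Module.finrank ℂ V ∧ FDRep.character V g ≠ 0}, ∀ h : G,
      h * x * h⁻¹ ∈ vanishingOff G := by
    intro x hx h
    apply Subgroup.subset_closure
    obtain ⟨V, h1, h2, h3⟩ := hx
    exact ⟨V, h1, h2, by rwa [FDRep.char_conj]⟩
  induction hn using Subgroup.closure_induction with
  | mem x hx => exact hset x hx g
  | one => simpa using (vanishingOff G).one_mem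
  | mul x y _ _ hx hy =>
      have : g * (x * y) * g⁻¹ = (g * x * g⁻¹) * (g * y * g⁻¹) := by group
      rw [this]; exact mul_mem hx hy
  | inv x _ hx =>
      have : g * x⁻¹ * g⁻¹ = (g * x * g⁻¹)⁻¹ := by group
      rw [this]; exact inv_mem hx

/-- `paperV G i` is `V_i` : `V_1 = V(G)`, `V_i = [V_{i-1}, G]`. -/
def paperV (G : Type) [Group G] : ℕ → Subgroup G
  | 0 => ⊤
  | 1 => vanishingOff G
  | (n+2) => ⁅paperV G (n+1), (⊤ : Subgroup G)⁆

instance paperV_normal (G : Type) [Group G] (i : ℕ) : (paperV G i).Normal := by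
  induction i with
  | zero => exact inferInstanceAs (⊤ : Subgroup G).Normal
  | succ n ih =>
    match n, ih with
    | 0, _ => exact inferInstanceAs (vanishingOff G).Normal
    | (m+1), ih => exact Subgroup.commutator_normal _ _

/-- `paperLCS G i` is `G_i`, the `i`-th term of the lower central series with
the paper's indexing: `G_1 = G`, `G_{i+1} = [G_i, G]`. -/
def paperLCS (G : Type) [Group G] (i : ℕ) : Subgroup G := (⊤ : Subgroup G).lowerCentralSeries (i - 1)

instance paperLCS_normal (G : Type) [Group G] (i : ℕ) : (paperLCS G i).Normal :=
  Subgroup.lowerCentralSeries_normal ⊤ _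

/-- `Y_i`, defined by `Y_i/V_i = Z(G/V_i)`. -/
def paperY (G : Type) [Group G] (i : ℕ) : Subgroup G :=
  (Subgroup.center (G ⧸ paperV G i)).comap (QuotientGroup.mk' (paperV G i))

instance paperY_normal (G : Type) [Group G] (i : ℕ) : (paperY G i).Normal :=
  Subgroup.Normal.comap inferInstance _

/-- `D_i`, defined by `D_i/V_i = C_{G/V_i}(G_{i-1}/V_i)`. -/
def paperD (G : Type) [Group G] (i : ℕ) : Subgroup G :=
  (Subgroup.centralizer (((paperLCS G (i-1)).map (QuotientGroup.mk' (paperV G i))) :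
      Set (G ⧸ paperV G i))).comap (QuotientGroup.mk' (paperV G i))

instance paperLCSinfY_normal (G : Type) [Group G] (i j : ℕ) :
    (paperLCS G i ⊓ paperY G j).Normal := Subgroup.normal_inf_normal _ _

/-- `E_i`, defined by `E_i/(G_{i-1} ∩ Y_i) = C_{G/(G_{i-1} ∩ Y_i)}(G_{i-2}/(G_{i-1} ∩ Y_i))`. -/
def paperE (G : Type) [Group G] (i : ℕ) : Subgroup G :=
  (Subgroup.centralizer (((paperLCS G (i-2)).map
      (QuotientGroup.mk' (paperLCS G (i-1) ⊓ paperY G i))) :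
      Set (G ⧸ (paperLCS G (i-1) ⊓ paperY G i)))).comap
    (QuotientGroup.mk' (paperLCS G (i-1) ⊓ paperY G i))

/-- `G_i` is `H_1`: for every normal `N` with `V_i ≤ N < G_i`,
`V_{i-1}/N = (G_{i-1}/N) ∩ Z(G/N)`. -/
def IsH1 (G : Type) [Group G] (i : ℕ) : Prop :=
  ∀ (N : Subgroup G) (hN : N.Normal), paperV G i ≤ N → N < paperLCS G i →
    letI := hN
    (paperV G (i-1)).map (QuotientGroup.mk' N) =
      (paperLCS G (i-1)).map (QuotientGroup.mk' N) ⊓ Subgroup.center (G ⧸ N)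
theorem stmt5 (G : Type) [Group G] [Finite G] (i : ℕ) (hi : 4 ≤ i)
    (hV : paperV G i = ⊥)
    (hab : ∀ x ∈ commutator G, ∀ y ∈ commutator G, x * y = y * x) :
    Subgroup.centralizer (paperLCS G (i-1) : Set G) ≤
      (Subgroup.centralizer (((paperLCS G (i-2)).map
          (QuotientGroup.mk' (paperLCS G (i-1) ⊓ Subgroup.center G))) :
          Set (G ⧸ (paperLCS G (i-1) ⊓ Subgroup.center G)))).comap
        (QuotientGroup.mk' (paperLCS G (i-1) ⊓ Subgroup.center G)) := by
  intro x hx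
  set D := Subgroup.centralizer (paperLCS G (i-1) : Set G) with hD
  set K := paperLCS G (i-2) with hK
  -- paperLCS indices
  have hK3 : K = (⊤ : Subgroup G).lowerCentralSeries (i-3) := rfl
  have hG1 : paperLCS G (i-1) = (⊤ : Subgroup G).lowerCentralSeries (i-2) := rfl
  have hstep : ⁅K, (⊤ : Subgroup G)⁆ = paperLCS G (i-1) := by
    rw [hK3, hG1]
    have : i - 2 = (i - 3) + 1 := by omega
    rw [this]
    rfl
  -- K ≤ commutator G
  have hKle : K ≤ commutator G := by
    rw [hK3, ← Subgroup.top_lowerCentralSeries_one]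
    exact (⊤ : Subgroup G).lowerCentralSeries_antitone (by omega)
  have hTD : ⁅(⊤ : Subgroup G), D⁆ ≤ commutator G := by
    rw [_root_.commutator_def]
    exact Subgroup.commutator_mono le_rfl le_top
  -- h1 : ⁅⁅⊤, D⁆, K⁆ = ⊥
  have h1 : ⁅⁅(⊤ : Subgroup G), D⁆, K⁆ = ⊥ := by
    rw [Subgroup.commutator_eq_bot_iff_le_centralizer]
    intro a ha
    rw [Subgroup.mem_centralizer_iff]
    intro b hb
    exact hab b (hKle hb) a (hTD ha)
  -- h2 : ⁅⁅K, ⊤⁆, D⁆ = ⊥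
  have h2 : ⁅⁅K, (⊤ : Subgroup G)⁆, D⁆ = ⊥ := by
    rw [hstep, Subgroup.commutator_eq_bot_iff_le_centralizer]
    intro a ha
    rw [Subgroup.mem_centralizer_iff]
    intro b hb
    exact (hb a ha).symm
  have h3 : ⁅⁅D, K⁆, (⊤ : Subgroup G)⁆ = ⊥ :=
    Subgroup.commutator_commutator_eq_bot_of_rotate h2 h1
  have hcen : ⁅D, K⁆ ≤ Subgroup.center G := by
    rw [Subgroup.commutator_eq_bot_iff_le_centralizer] at h3
    simpa [Subgroup.centralizer_univ] using h3
  have hin : ⁅D, K⁆ ≤ paperLCS G (i-1) := by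
    rw [← hstep, Subgroup.commutator_comm]
    exact Subgroup.commutator_mono le_rfl le_top
  have hN : ⁅D, K⁆ ≤ paperLCS G (i-1) ⊓ Subgroup.center G := le_inf hin hcen
  -- conclude
  rw [Subgroup.mem_comap, Subgroup.mem_centralizer_iff]
  rintro y hy
  obtain ⟨g, hg, rfl⟩ := Subgroup.mem_map.mp hy
  open scoped commutatorElement in
  have hcomm : ⁅x, g⁆ ∈ paperLCS G (i-1) ⊓ Subgroup.center G :=
    hN (Subgroup.commutator_mem_commutator hx hg)
  open scoped commutatorElement in
  have : (QuotientGroup.mk' (paperLCS G (i-1) ⊓ Subgroup.center G)) ⁅x, g⁆ = 1 := by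
    rw [QuotientGroup.mk'_apply, QuotientGroup.eq_one_iff]
    exact hcomm
  rw [map_commutatorElement, commutatorElement_eq_one_iff_mul_comm] at this
  exact this.symm
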